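/- arXiv:2007.10241 — 2 statements merged into one kernel-verified Lean document; each statement's English description precedes it below -/
import Mathlib

section
/- Let (a_n)_{n≥1}, (b_n)_{n≥1} be sequences of reals with 0 < a_n ≤ b_n and set Δ_n = log(b_n/a_n). Suppose that either (i) lim_{n→∞} (a_1⋯a_n)^{1/n} = ∞ and liminf_{n→∞} (log Δ_{n+1})/log(a_1⋯a_n) < 1, or (ii) limsup_{n→∞} (a_1⋯a_n)^{1/n} = ∞ and limsup_{n→∞} (log Δ_{n+1})/log(a_1⋯a_n) < 1. Then liminf_{n→∞} (Δ_{n+1}/(a_1⋯a_n))^{1/n} = 0. -/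
open Filter

/-- `Δ_n = log (b_n / a_n)`. -/
noncomputable def Del (a b : ℕ → ℝ) (n : ℕ) : ℝ := Real.log (b n / a n)

lemma pointwise_est {Δ P M c ε : ℝ} {n : ℕ} (hn : 1 ≤ n) (hΔ : 0 ≤ Δ) (hP : 0 < P)
    (hM : 1 < M) (hMP : M < P ^ ((1:ℝ)/(n:ℝ)))
    (hratio : Real.log Δ / Real.log P < c) (hc : c < 1)
    (hMε : M ^ (c - 1) < ε) (hε : 0 < ε) :
    (Δ / P) ^ ((1:ℝ)/(n:ℝ)) < ε := by
  have hnpos : (0:ℝ) < (1:ℝ)/(n:ℝ) := by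
    have : (0:ℝ) < (n:ℝ) := by exact_mod_cast hn
    positivity
  have hP1 : 1 < P := by
    by_contra h'
    push_neg at h'
    have := Real.rpow_le_one hP.le h' hnpos.le
    linarith
  have hlogP : 0 < Real.log P := Real.log_pos hP1
  have hlogΔ : Real.log Δ < c * Real.log P := by
    rw [div_lt_iff₀ hlogP] at hratio; linarith
  rcases eq_or_lt_of_le hΔ with h0 | hΔpos
  · rw [← h0, zero_div, Real.zero_rpow hnpos.ne']
    exact hε
  have hΔP : Δ < P ^ c := by
    rw [Real.rpow_def_of_pos hP]
    calc Δ = Real.exp (Real.log Δ) := (Real.exp_log hΔpos).symm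
    _ < Real.exp (Real.log P * c) := by
        apply Real.exp_lt_exp.2
        calc Real.log Δ < c * Real.log P := hlogΔ
        _ = Real.log P * c := mul_comm _ _
  have hdiv : Δ / P < P ^ (c - 1) := by
    rw [Real.rpow_sub hP, Real.rpow_one]
    exact div_lt_div_of_pos_right hΔP hP
  have h1 : (Δ / P) ^ ((1:ℝ)/(n:ℝ)) < (P ^ (c-1)) ^ ((1:ℝ)/(n:ℝ)) :=
    Real.rpow_lt_rpow (by positivity) hdiv hnpos
  have h2 : (P ^ (c-1)) ^ ((1:ℝ)/(n:ℝ)) = (P ^ ((1:ℝ)/(n:ℝ))) ^ (c-1) := by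
    rw [← Real.rpow_mul hP.le, ← Real.rpow_mul hP.le, mul_comm]
  have h3 : (P ^ ((1:ℝ)/(n:ℝ))) ^ (c-1) < M ^ (c-1) :=
    Real.rpow_lt_rpow_of_neg (by linarith) hMP (by linarith)
  calc (Δ / P) ^ ((1:ℝ)/(n:ℝ)) < (P ^ ((1:ℝ)/(n:ℝ))) ^ (c-1) := h2 ▸ h1
  _ < M ^ (c-1) := h3
  _ < ε := hMε

theorem stmt1 (a b : ℕ → ℝ)
    (hab : ∀ n, 1 ≤ n → 0 < a n ∧ a n ≤ b n)
    (h : (Filter.Tendsto (fun n : ℕ => (∏ m ∈ Finset.Icc 1 n, a m) ^ ((1 : ℝ) / (n : ℝ)))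
            atTop atTop ∧
          Filter.liminf
            (fun n : ℕ =>
              ((Real.log (Del a b (n + 1)) / Real.log (∏ m ∈ Finset.Icc 1 n, a m) : ℝ) : EReal))
            atTop < 1) ∨
         (Filter.limsup
            (fun n : ℕ => (((∏ m ∈ Finset.Icc 1 n, a m) ^ ((1 : ℝ) / (n : ℝ)) : ℝ) : EReal))
            atTop = ⊤ ∧
          Filter.limsup
            (fun n : ℕ =>
              ((Real.log (Del a b (n + 1)) / Real.log (∏ m ∈ Finset.Icc 1 n, a m) : ℝ) : EReal))
            atTop < 1)) :
    Filter.liminf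
      (fun n : ℕ =>
        (((Del a b (n + 1) / ∏ m ∈ Finset.Icc 1 n, a m) ^ ((1 : ℝ) / (n : ℝ)) : ℝ) : EReal))
      atTop = 0 := by
  set P : ℕ → ℝ := fun n => ∏ m ∈ Finset.Icc 1 n, a m with hPdef
  have hP : ∀ n, 0 < P n := fun n =>
    Finset.prod_pos fun m hm => (hab m (Finset.mem_Icc.1 hm).1).1
  have hDel : ∀ n, 0 ≤ Del a b (n + 1) := by
    intro n
    have h1 := hab (n+1) (by omega)
    exact Real.log_nonneg ((one_le_div h1.1).2 h1.2)
  have key : ∀ ε : ℝ, 0 < ε → ∃ᶠ n in atTop,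
      (((Del a b (n + 1) / P n) ^ ((1 : ℝ) / (n : ℝ)) : ℝ) : EReal) < (ε : EReal) := by
    intro ε hε
    have hc1 : ∃ c : ℝ, c < 1 ∧
        ((Tendsto (fun n : ℕ => (P n) ^ ((1:ℝ)/(n:ℝ))) atTop atTop ∧
            (∃ᶠ n in atTop, Real.log (Del a b (n + 1)) / Real.log (P n) < c)) ∨
          ((∀ M : ℝ, ∃ᶠ n in atTop, M < (P n) ^ ((1:ℝ)/(n:ℝ))) ∧
            (∀ᶠ n in atTop, Real.log (Del a b (n + 1)) / Real.log (P n) < c))) := by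
      rcases h with ⟨ht, hl⟩ | ⟨ht, hl⟩
      · obtain ⟨c, hc1, hc2⟩ := EReal.exists_between_coe_real hl
        refine ⟨c, by exact_mod_cast hc2, Or.inl ⟨ht, ?_⟩⟩
        have := Filter.frequently_lt_of_liminf_lt (u := fun n : ℕ =>
          ((Real.log (Del a b (n + 1)) / Real.log (P n) : ℝ) : EReal))
          (b := (c : EReal)) (by isBoundedDefault) hc1
        exact this.mono fun n hn => EReal.coe_lt_coe_iff.1 hn
      · obtain ⟨c, hc1, hc2⟩ := EReal.exists_between_coe_real hl
        refine ⟨c, by exact_mod_cast hc2, Or.inr ⟨?_, ?_⟩⟩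
        · intro M
          have hlt : (M : EReal) < Filter.limsup
              (fun n : ℕ => (((P n) ^ ((1:ℝ)/(n:ℝ)) : ℝ) : EReal)) atTop := by
            rw [ht]; exact EReal.coe_lt_top M
          have := Filter.frequently_lt_of_lt_limsup (by isBoundedDefault) hlt
          exact this.mono fun n hn => EReal.coe_lt_coe_iff.1 hn
        · have := Filter.eventually_lt_of_limsup_lt (u := fun n : ℕ =>
            ((Real.log (Del a b (n + 1)) / Real.log (P n) : ℝ) : EReal)) hc1
          exact this.mono fun n hn => EReal.coe_lt_coe_iff.1 hn
    obtain ⟨c, hc, hcase⟩ := hc1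
    set M : ℝ := max 2 (Real.exp (Real.log ε / (c - 1)) + 1) with hMdef
    have hM1 : 1 < M := lt_of_lt_of_le one_lt_two (le_max_left _ _)
    have hMε : M ^ (c - 1) < ε := by
      have hMpos : 0 < M := by linarith
      have hlogM : Real.log ε / (c - 1) < Real.log M := by
        have h1 : Real.exp (Real.log ε / (c - 1)) < M :=
          lt_of_lt_of_le (by linarith) (le_max_right _ _)
        calc Real.log ε / (c - 1) = Real.log (Real.exp (Real.log ε / (c - 1))) :=
              (Real.log_exp _).symm
        _ < Real.log M := Real.log_lt_log (Real.exp_pos _) h1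
      rw [Real.rpow_def_of_pos hMpos, ← Real.exp_log hε]
      apply Real.exp_lt_exp.2
      rw [div_lt_iff_of_neg (by linarith : c - 1 < 0)] at hlogM
      exact hlogM
    have hcomb : ∃ᶠ n in atTop, 1 ≤ n ∧ M < (P n) ^ ((1:ℝ)/(n:ℝ)) ∧
        Real.log (Del a b (n + 1)) / Real.log (P n) < c := by
      rcases hcase with ⟨ht, hfreq⟩ | ⟨ht, hev⟩
      · have hevb : ∀ᶠ n in atTop, 1 ≤ n ∧ M < (P n) ^ ((1:ℝ)/(n:ℝ)) :=
          (eventually_ge_atTop 1).and (ht.eventually_gt_atTop M)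
        exact (hfreq.and_eventually hevb).mono fun n ⟨h1, h2, h3⟩ => ⟨h2, h3, h1⟩
      · have hevb : ∀ᶠ n in atTop, 1 ≤ n ∧
            Real.log (Del a b (n + 1)) / Real.log (P n) < c :=
          (eventually_ge_atTop 1).and hev
        exact ((ht M).and_eventually hevb).mono fun n ⟨h1, h2, h3⟩ => ⟨h2, h1, h3⟩
    refine hcomb.mono fun n ⟨hn, hMP, hr⟩ => ?_
    exact EReal.coe_lt_coe_iff.2 (pointwise_est hn (hDel n) (hP n) hM1 hMP hr hc hMε hε)
  apply le_antisymm
  · by_contra h'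
    push_neg at h'
    obtain ⟨ε, hε0, hεl⟩ := EReal.exists_between_coe_real h'
    have hεpos : (0:ℝ) < ε := by exact_mod_cast hε0
    have hle : Filter.liminf
        (fun n : ℕ =>
          (((Del a b (n + 1) / P n) ^ ((1 : ℝ) / (n : ℝ)) : ℝ) : EReal))
        atTop ≤ (ε : EReal) :=
      Filter.liminf_le_of_frequently_le ((key ε hεpos).mono fun n hn => hn.le)
        (by isBoundedDefault)
    exact absurd (lt_of_le_of_lt hle hεl) (lt_irrefl _)
  · apply Filter.le_liminf_of_le (by isBoundedDefault)
    filter_upwards with n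
    have : (0:ℝ) ≤ (Del a b (n + 1) / P n) ^ ((1:ℝ)/(n:ℝ)) :=
      Real.rpow_nonneg (div_nonneg (hDel n) (hP n).le) _
    exact_mod_cast EReal.coe_nonneg.2 this
end

section
/- Let λ = (λ_n)_{n≥1} be a sequence in ℂ∖{0} with sup_{n∈ℕ} |λ_n| < ∞, and let a = (a_n)_{n≥1}, b = (b_n)_{n≥1} be sequences with 1 < a_n ≤ b_n that are admissible with constant q ∈ (0,1) and satisfy liminf_{n→∞} a_n > A for a sufficiently large constant A > 1 (depending on q and sup_n |λ_n|). If sup_{n∈ℕ} (log b_n)/(log a_n) < ∞, then sup_{n∈ℕ} Δ_{n+1}/a_n < ∞. -/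
/-!
Admissibility gives `a_{n+1} ≤ |λ_{n+1}| e^{q a_n}`, so `log a_{n+1} ≤ log Λ + q a_n`, where `Λ`
bounds `|λ_n|`. If `log b_n ≤ C log a_n`, then `Δ_{n+1} = log b_{n+1} - log a_{n+1}` is at most
`(C - 1) log a_{n+1}`, hence linear in `a_n`; the finitely many early indices only change the bound.
-/

open Filter MeasureTheory
open scoped ENNReal

/-- Non-autonomous exponential iteration: `F lam n = E_{λ_n} ∘ ⋯ ∘ E_{λ_1}`. -/
noncomputable def F (lam : ℕ → ℂ) : ℕ → ℂ → ℂ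
  | 0, z => z
  | n + 1, z => lam (n + 1) * Complex.exp (F lam n z)

/-- The set `I_a^b(E_λ)`. -/
def Iab (lam : ℕ → ℂ) (a b : ℕ → ℝ) : Set ℂ :=
  {z : ℂ | ∀ᶠ n in atTop, a n ≤ ‖F lam n z‖ ∧ ‖F lam n z‖ ≤ b n}

/-- Admissibility of the sequences `a`, `b` with constant `q`. -/
def Admissible (lam : ℕ → ℂ) (a b : ℕ → ℝ) (q : ℝ) : Prop :=
  ∀ᶠ n in atTop, a (n + 1) ≤ ‖lam (n + 1)‖ * Real.exp (q * a n) ∧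
    ‖lam (n + 1)‖ * Real.exp (-(q * a n)) ≤ b (n + 1)

open Real

lemma Real.log_le_log_add_of_le_mul_exp {x l Λ t : ℝ} (hx : 0 < x) (hl : 0 < l) (hlΛ : l ≤ Λ)
    (h : x ≤ l * exp t) : log x ≤ log Λ + t :=
  calc log x ≤ log (l * exp t) := log_le_log hx h
    _ = log l + t := by rw [log_mul hl.ne' (exp_ne_zero t), log_exp]
    _ ≤ log Λ + t := by gcongr

lemma Del_le_sub_one_mul_log {a b : ℕ → ℝ} {n : ℕ} {C : ℝ} (ha : 1 < a n) (hab : a n ≤ b n)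
    (hC : log (b n) / log (a n) ≤ C) : Del a b n ≤ (C - 1) * log (a n) := by
  have hlog_a : 0 < log (a n) := log_pos ha
  have hlog_b : log (b n) ≤ C * log (a n) := (div_le_iff₀ hlog_a).mp hC
  rw [Del, log_div (by linarith) (by linarith)]
  linarith

lemma Del_succ_div_le {a b : ℕ → ℝ} {n : ℕ} {l Λ q C : ℝ} (ha : 1 < a n)
    (ha_succ : 1 < a (n + 1)) (hab_succ : a (n + 1) ≤ b (n + 1)) (hl : 0 < l) (hlΛ : l ≤ Λ)
    (hgrowth : a (n + 1) ≤ l * exp (q * a n)) (hC : 1 ≤ C)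
    (hratio : log (b (n + 1)) / log (a (n + 1)) ≤ C) :
    Del a b (n + 1) / a n ≤ (C - 1) * (|log Λ| + q) := by
  have hlog_a_succ : log (a (n + 1)) ≤ log Λ + q * a n :=
    log_le_log_add_of_le_mul_exp (by linarith) hl hlΛ hgrowth
  have hlogΛ : log Λ ≤ |log Λ| * a n := by nlinarith [le_abs_self (log Λ), abs_nonneg (log Λ)]
  rw [div_le_iff₀ (by linarith)]
  calc Del a b (n + 1) ≤ (C - 1) * log (a (n + 1)) :=
        Del_le_sub_one_mul_log ha_succ hab_succ hratio
    _ ≤ (C - 1) * (log Λ + q * a n) := by gcongr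
    _ ≤ (C - 1) * (|log Λ| + q) * a n := by nlinarith

lemma exists_forall_le_of_eventually_le {f : ℕ → ℝ} {C : ℝ} (h : ∀ᶠ n in atTop, f n ≤ C) :
    ∃ C', ∀ n, f n ≤ C' :=
  (isBoundedUnder_of_eventually_le h).bddAbove_range.imp fun _ hC' n => hC' ⟨n, rfl⟩

theorem stmt6_general (q : ℝ) (Λ : ℝ) :
    ∃ A > (1 : ℝ), ∀ (lam : ℕ → ℂ) (a b : ℕ → ℝ),
      (∀ n, 1 ≤ n → lam n ≠ 0) →
      (∀ n, ‖lam n‖ ≤ Λ) →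
      (∀ n, 1 ≤ n → 1 < a n ∧ a n ≤ b n) →
      Admissible lam a b q →
      (A : EReal) < Filter.liminf (fun n : ℕ => ((a n : ℝ) : EReal)) atTop →
      (∃ C : ℝ, ∀ n, 1 ≤ n → Real.log (b n) / Real.log (a n) ≤ C) →
      ∃ C : ℝ, ∀ n, 1 ≤ n → Del a b (n + 1) / a n ≤ C := by
  refine ⟨2, one_lt_two, fun lam a b hlam hlamΛ hab hadm _ ⟨C, hC⟩ => ?_⟩
  have hbound : ∀ᶠ n in atTop, Del a b (n + 1) / a n ≤ (max C 1 - 1) * (|log Λ| + q) := by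
    filter_upwards [hadm, eventually_ge_atTop 1] with n ⟨hgrowth, _⟩ hn
    exact Del_succ_div_le (hab n hn).1 (hab (n + 1) (by omega)).1 (hab (n + 1) (by omega)).2
      (norm_pos_iff.mpr (hlam (n + 1) (by omega))) (hlamΛ (n + 1)) hgrowth (le_max_right C 1)
      ((hC (n + 1) (by omega)).trans (le_max_left C 1))
  obtain ⟨C', hC'⟩ := exists_forall_le_of_eventually_le hbound
  exact ⟨C', fun n _ => hC' n⟩

theorem stmt6 (q : ℝ) (hq : 0 < q ∧ q < 1) (Λ : ℝ) :
    ∃ A > (1 : ℝ), ∀ (lam : ℕ → ℂ) (a b : ℕ → ℝ),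
      (∀ n, 1 ≤ n → lam n ≠ 0) →
      (∀ n, ‖lam n‖ ≤ Λ) →
      (∀ n, 1 ≤ n → 1 < a n ∧ a n ≤ b n) →
      Admissible lam a b q →
      (A : EReal) < Filter.liminf (fun n : ℕ => ((a n : ℝ) : EReal)) atTop →
      (∃ C : ℝ, ∀ n, 1 ≤ n → Real.log (b n) / Real.log (a n) ≤ C) →
      ∃ C : ℝ, ∀ n, 1 ≤ n → Del a b (n + 1) / a n ≤ C :=
  stmt6_general q Λ
end
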